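/- arXiv:1004.1596 — 2 statements merged into one kernel-verified Lean document; each statement's English description precedes it below -/
import Mathlib

section
/- Let n be a natural number and for p ∈ [0,1] let μ_p denote the product probability measure on configurations ω : Fin n → Bool in which the n coordinates are independent and each coordinate equals true with probability p. Let A ⊆ (Fin n → Bool) be increasing, i.e. if ω ∈ A and ω(i) = true implies ω'(i) = true for all i, then ω' ∈ A. For i ∈ Fin n, say that coordinate i is pivotal for A in the configuration ω if the configuration obtained from ω by setting coordinate i to true lies in A while the configuration obtained by setting coordinate i to false does not. Then for every p ∈ (0,1), the function p ↦ μ_p(A) is differentiable at p with derivative equal to the sum over i ∈ Fin n of μ_p({ω : coordinate i is pivotal for A in ω}); equivalently, (d/dp) μ_p(A) equals the expected number of pivotal coordinates under μ_p. -/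
/-!
Give coordinate `j` its own parameter `p_j`; the weight of a configuration is then affine in each
`p_j`, so `d/dp μ_p(A)` is the sum over `i` of the partial derivatives `∂/∂p_i`. Summing
`∂/∂p_i` of the weights over `A` pairs each configuration with its flip at `i`: a pair
contributes `1_A(ω^{i,true}) - 1_A(ω^{i,false})` times the weight of the other coordinates,
and for an increasing `A` this difference is the indicator that `i` is pivotal.
-/

/-- The probability of the event `A` under the product measure on `Fin n → Bool` in which the
coordinates are independent and each equals `true` with probability `p`. -/
noncomputable def bernoulliProdProb (n : ℕ) (p : ℝ) (A : Set (Fin n → Bool)) : ℝ :=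
  ∑ ω : Fin n → Bool,
    A.indicator (fun ω' => ∏ i : Fin n, if ω' i = true then p else 1 - p) ω

/-- Coordinate `i` is pivotal for the event `A` in the configuration `ω`: setting coordinate
`i` to `true` puts the configuration in `A`, while setting it to `false` takes it out of `A`. -/
def Pivotal {n : ℕ} (A : Set (Fin n → Bool)) (i : Fin n) (ω : Fin n → Bool) : Prop :=
  Function.update ω i true ∈ A ∧ Function.update ω i false ∉ A

open Finset Function

section UpdateSums

variable {ι β M : Type*} [Fintype ι] [DecidableEq ι] [Fintype β] [DecidableEq β] [AddCommMonoid M]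

theorem sum_filter_apply_eq_update (i : ι) (a b : β) (g : (ι → β) → M) :
    ∑ ω with ω i = a, g (update ω i b) = ∑ ω with ω i = b, g ω :=
  sum_nbij' (update · i b) (update · i a) (by simp) (by simp)
    (fun ω hω => by simp_all) (fun ω hω => by simp_all) (fun _ _ => rfl)

theorem sum_eq_sum_filter_sum_update (i : ι) (a : β) (g : (ι → β) → M) :
    ∑ ω, g ω = ∑ ω with ω i = a, ∑ b, g (update ω i b) := by
  rw [sum_comm]
  simp_rw [sum_filter_apply_eq_update]
  exact (sum_fiberwise _ _ _).symm

end UpdateSums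

section ConfigWeight

variable {ι : Type*} [Fintype ι]

def coordProb (t : ℝ) (b : Bool) : ℝ := if b then t else 1 - t

def configWeight (t : ℝ) (ω : ι → Bool) : ℝ := ∏ j, coordProb t (ω j)

variable [DecidableEq ι]

def configWeightExcept (i : ι) (t : ℝ) (ω : ι → Bool) : ℝ :=
  ∏ j ∈ univ.erase i, coordProb t (ω j)

/-- `∂/∂p_i` of the weight of `ω` when each coordinate `j` has its own parameter `p_j`, at
`p_j = t` for all `j`. -/
def configWeightPartial (i : ι) (t : ℝ) (ω : ι → Bool) : ℝ :=
  configWeightExcept i t ω * if ω i then 1 else -1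

theorem configWeight_eq_mul (i : ι) (t : ℝ) (ω : ι → Bool) :
    configWeight t ω = coordProb t (ω i) * configWeightExcept i t ω :=
  (mul_prod_erase univ _ (mem_univ i)).symm

theorem configWeightExcept_update (i : ι) (b : Bool) (t : ℝ) (ω : ι → Bool) :
    configWeightExcept i t (update ω i b) = configWeightExcept i t ω :=
  prod_congr rfl fun _ hj => by rw [update_of_ne (ne_of_mem_erase hj)]

theorem configWeight_update (i : ι) (b : Bool) (t : ℝ) (ω : ι → Bool) :
    configWeight t (update ω i b) = coordProb t b * configWeightExcept i t ω := by
  rw [configWeight_eq_mul i, update_self, configWeightExcept_update]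

theorem hasDerivAt_coordProb (b : Bool) (t : ℝ) :
    HasDerivAt (coordProb · b) (if b then 1 else -1) t := by
  cases b
  · simpa [coordProb] using (hasDerivAt_id t).const_sub 1
  · simpa [coordProb] using hasDerivAt_id' t

theorem hasDerivAt_configWeight (ω : ι → Bool) (t : ℝ) :
    HasDerivAt (configWeight · ω) (∑ i, configWeightPartial i t ω) t :=
  HasDerivAt.fun_finsetProd fun i _ => hasDerivAt_coordProb (ω i) t

end ConfigWeight

theorem bernoulliProdProb_eq_sum_indicator (n : ℕ) (t : ℝ) (A : Set (Fin n → Bool)) :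
    bernoulliProdProb n t A = ∑ ω, A.indicator (configWeight t) ω :=
  rfl

theorem hasDerivAt_bernoulliProdProb (n : ℕ) (A : Set (Fin n → Bool)) (t : ℝ) :
    HasDerivAt (bernoulliProdProb n · A)
      (∑ i, ∑ ω, A.indicator (configWeightPartial i t) ω) t := by
  simp_rw [bernoulliProdProb_eq_sum_indicator]
  rw [sum_comm]
  refine HasDerivAt.fun_sum fun ω _ => ?_
  by_cases hω : ω ∈ A
  · simpa only [Set.indicator_of_mem hω] using hasDerivAt_configWeight ω t
  · simpa only [Set.indicator_of_notMem hω, sum_const_zero] using hasDerivAt_const t (0 : ℝ)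

theorem IsUpperSet.sum_indicator_configWeightPartial {n : ℕ} {A : Set (Fin n → Bool)}
    (hA : IsUpperSet A) (i : Fin n) (t : ℝ) :
    ∑ ω, A.indicator (configWeightPartial i t) ω = bernoulliProdProb n t {ω | Pivotal A i ω} := by
  classical
  rw [bernoulliProdProb_eq_sum_indicator, sum_eq_sum_filter_sum_update i true,
    sum_eq_sum_filter_sum_update i true (fun ω => Set.indicator _ _ ω)]
  refine sum_congr rfl fun ω _ => ?_
  have hmono : update ω i false ∈ A → update ω i true ∈ A :=
    hA (update_mono (Bool.false_le true))
  simp only [Fintype.sum_bool, Set.indicator_apply, configWeight_update,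
    configWeightPartial, configWeightExcept_update, update_self, coordProb, Pivotal]
  split_ifs <;> simp_all
  ring

theorem margulis_russo_general
    (n : ℕ) (A : Set (Fin n → Bool))
    (hA : ∀ ω ∈ A, ∀ ω' : Fin n → Bool, (∀ i, ω i = true → ω' i = true) → ω' ∈ A)
    (p : ℝ) :
    HasDerivAt (fun t => bernoulliProdProb n t A)
      (∑ i : Fin n, bernoulliProdProb n p {ω | Pivotal A i ω}) p := by
  have hup : IsUpperSet A := fun ω ω' hle hω => hA ω hω ω' fun i => Bool.le_iff_imp.mp (hle i)
  simpa only [hup.sum_indicator_configWeightPartial] using hasDerivAt_bernoulliProdProb n A p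

/-- Margulis–Russo formula: for an increasing event `A` on `n` independent Bernoulli(`p`)
variables, `p ↦ μ_p(A)` is differentiable on `(0,1)` with derivative the expected number of
pivotal coordinates, i.e. the sum over `i` of the probability that `i` is pivotal. -/
theorem margulis_russo
    (n : ℕ) (A : Set (Fin n → Bool))
    (hA : ∀ ω ∈ A, ∀ ω' : Fin n → Bool, (∀ i, ω i = true → ω' i = true) → ω' ∈ A)
    (p : ℝ) (hp : p ∈ Set.Ioo (0 : ℝ) 1) :
    HasDerivAt (fun t => bernoulliProdProb n t A)
      (∑ i : Fin n, bernoulliProdProb n p {ω | Pivotal A i ω}) p :=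
  margulis_russo_general n A hA p
end

section
/- Let δ : ℝ × ℝ → ℝ be continuous on the open square (0,1) × (0,1) and strictly positive there. Let (f_n)_{n ∈ ℕ} be a sequence of functions f_n : ℝ × ℝ → ℝ, each differentiable at every point of (0,1) × (0,1), such that for every n and every (p,q) ∈ (0,1) × (0,1) the partial derivatives satisfy ∂f_n/∂p (p,q) ≥ 0 and ∂f_n/∂q (p,q) ≥ δ(p,q) · ∂f_n/∂p (p,q). Then for every (p*, q*) ∈ (0,1) × (0,1) there exist ε > 0 and κ > 0 with 0 < p* − ε, p* + ε < 1, 0 < q* − κ, q* + κ < 1, such that f_n(p* + ε, q* − κ) ≤ f_n(p* − ε, q* + κ) for every n. -/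
/-! Take a closed sup-norm ball `K = [p-r, p+r] × [q-r, q+r]` inside the open square; by
compactness `δ ≥ m > 0` on `K`. Put `κ = r` and `ε = min r (r m)`. Along the segment from
`(p+ε, q-κ)` to `(p-ε, q+κ)` the directional derivative of `f n` is
`-2ε ∂_p f_n + 2κ ∂_q f_n ≥ 2(κ δ - ε) ∂_p f_n ≥ 0`, so `f n` does not decrease along it,
and `ε, κ` depend only on `δ`, not on `n`. -/

open Metric

theorem le_of_forall_mem_segment_fderiv_nonneg {E : Type*} [NormedAddCommGroup E]
    [NormedSpace ℝ E] {f : E → ℝ} {x y : E}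
    (hf : ∀ z ∈ segment ℝ x y, DifferentiableAt ℝ f z)
    (hf' : ∀ z ∈ segment ℝ x y, 0 ≤ fderiv ℝ f z (y - x)) : f x ≤ f y := by
  obtain ⟨z, hz, hxy⟩ := domain_mvt (fun z hz => (hf z hz).hasFDerivAt.hasFDerivWithinAt)
    (convex_segment x y) (left_mem_segment ℝ x y) (right_mem_segment ℝ x y)
  linarith [hf' z hz]

theorem ContinuousLinearMap.apply_prod_eq (L : ℝ × ℝ →L[ℝ] ℝ) (a b : ℝ) :
    L (a, b) = a * L (1, 0) + b * L (0, 1) := by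
  have : ((a, b) : ℝ × ℝ) = a • (1, 0) + b • (0, 1) := by simp
  rw [this, map_add, map_smul, map_smul, smul_eq_mul, smul_eq_mul]

theorem ContinuousLinearMap.apply_neg_prod_nonneg (L : ℝ × ℝ →L[ℝ] ℝ) {a b d : ℝ}
    (hL₁ : 0 ≤ L (1, 0)) (hL₂ : d * L (1, 0) ≤ L (0, 1)) (hb : 0 ≤ b) (hab : a ≤ b * d) :
    0 ≤ L (-a, b) := by
  rw [L.apply_prod_eq]
  nlinarith [mul_le_mul_of_nonneg_left hL₂ hb, mul_le_mul_of_nonneg_right hab hL₁]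

theorem Prod.mem_closedBall_of_abs_le {x y r : ℝ} (z : ℝ × ℝ)
    (hx : |z.1 - x| ≤ r) (hy : |z.2 - y| ≤ r) : z ∈ closedBall (x, y) r := by
  rw [mem_closedBall, Prod.dist_eq, max_le_iff, Real.dist_eq, Real.dist_eq]
  exact ⟨hx, hy⟩

/-- The 'small box' step: if `δ` is continuous and strictly positive on `(0,1)²` and each
`f n` is differentiable on `(0,1)²` with `∂f_n/∂p ≥ 0` and `∂f_n/∂q ≥ δ·∂f_n/∂p`, then
around every `(p*, q*) ∈ (0,1)²` one can choose `ε, κ > 0`, uniformly in `n`, such that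
`f n (p*+ε, q*−κ) ≤ f n (p*−ε, q*+κ)` for every `n`. -/
theorem small_box_comparison
    (δ : ℝ × ℝ → ℝ)
    (hδcont : ContinuousOn δ (Set.Ioo (0 : ℝ) 1 ×ˢ Set.Ioo (0 : ℝ) 1))
    (hδpos : ∀ z ∈ Set.Ioo (0 : ℝ) 1 ×ˢ Set.Ioo (0 : ℝ) 1, 0 < δ z)
    (f : ℕ → ℝ × ℝ → ℝ)
    (hdiff : ∀ n, ∀ z ∈ Set.Ioo (0 : ℝ) 1 ×ˢ Set.Ioo (0 : ℝ) 1, DifferentiableAt ℝ (f n) z)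
    (hdp : ∀ n, ∀ z ∈ Set.Ioo (0 : ℝ) 1 ×ˢ Set.Ioo (0 : ℝ) 1, 0 ≤ fderiv ℝ (f n) z (1, 0))
    (hdq : ∀ n, ∀ z ∈ Set.Ioo (0 : ℝ) 1 ×ˢ Set.Ioo (0 : ℝ) 1,
      δ z * fderiv ℝ (f n) z (1, 0) ≤ fderiv ℝ (f n) z (0, 1))
    (p q : ℝ) (hpq : (p, q) ∈ Set.Ioo (0 : ℝ) 1 ×ˢ Set.Ioo (0 : ℝ) 1) :
    ∃ ε κ : ℝ, 0 < ε ∧ 0 < κ ∧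
      0 < p - ε ∧ p + ε < 1 ∧ 0 < q - κ ∧ q + κ < 1 ∧
      ∀ n, f n (p + ε, q - κ) ≤ f n (p - ε, q + κ) := by
  obtain ⟨r, hr, hK⟩ := nhds_basis_closedBall.mem_iff.1
    ((isOpen_Ioo.prod isOpen_Ioo).mem_nhds hpq)
  obtain ⟨m, hm, hδm⟩ := (isCompact_closedBall (p, q) r).exists_forall_le'
    (hδcont.mono hK) fun z hz => hδpos z (hK hz)
  set ε := min r (r * m)
  have hε : 0 < ε := lt_min hr (mul_pos hr hm)
  have hεr : |ε| ≤ r := (abs_of_pos hε).trans_le (min_le_left _ _)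
  have hlo : (p + ε, q - r) ∈ closedBall (p, q) r :=
    Prod.mem_closedBall_of_abs_le _ (by simpa using hεr) (by simp [abs_of_pos hr])
  have hhi : (p - ε, q + r) ∈ closedBall (p, q) r :=
    Prod.mem_closedBall_of_abs_le _ (by simpa using hεr) (by simp [abs_of_pos hr])
  have hseg := (convex_closedBall (p, q) r).segment_subset hlo hhi
  have hdir : (p - ε, q + r) - (p + ε, q - r) = (-(2 * ε), 2 * r) := by
    ext <;> simp only [Prod.fst_sub, Prod.snd_sub] <;> ring
  refine ⟨ε, r, hε, hr, (hK hhi).1.1, (hK hlo).1.2, (hK hlo).2.1, (hK hhi).2.2,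
    fun n => le_of_forall_mem_segment_fderiv_nonneg (fun z hz => hdiff n z (hK (hseg hz)))
      fun z hz => ?_⟩
  have hεδ : 2 * ε ≤ 2 * r * δ z := by
    nlinarith [min_le_right r (r * m), hδm z (hseg hz)]
  rw [hdir]
  exact (fderiv ℝ (f n) z).apply_neg_prod_nonneg (hdp n z (hK (hseg hz)))
    (hdq n z (hK (hseg hz))) (by positivity) hεδ
end
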